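/- arXiv:2310.07305 — 3 statements merged into one kernel-verified Lean document; each statement's English description precedes it below -/
import Mathlib

section
/- For p ≥ 2 and 1 ≤ l < p, with ε_{p,l} = 0.1 if 2 ≤ p ≤ 4 and ε_{p,l} = min{0.1, (l+0.1)/(3.92p), (p−l+0.1)/(3.92p)} if p ≥ 5, the following inequalities hold: p·ε_{p+1,l} + (p+1)·ε_{p,l} ≤ 0.9·l and p·ε_{p+1,l+1} + (p+1)·ε_{p,l} ≤ 0.9·(p−l). -/
/-!
Write `a` for `l` or `p - l`; in both inequalities `a ≥ 1`. For `p ≤ 4` every `ε` is at most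
`0.1`, and `0.1 p + 0.1 (p + 1) ≤ 0.9` exactly when `p ≤ 4`. For `p ≥ 5` the two `ε`'s are bounded
by `(a + 0.1) / (3.92 (p + 1))` and `(a + 0.1) / (3.92 p)`, so the left side is at most
`(a + 0.1) / 3.92 · (p / (p + 1) + (p + 1) / p) ≤ (a + 0.1) / 3.92 · 5 / 2 ≤ 0.9 a`.
-/

open Real

/-- `ε_{p,l} = 0.1` if `2 ≤ p ≤ 4`, and
`ε_{p,l} = min{0.1, (l+0.1)/(3.92p), (p−l+0.1)/(3.92p)}` if `p ≥ 5`. -/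
noncomputable def eps (p l : ℕ) : ℝ :=
  if p ≤ 4 then 0.1
  else min 0.1 (min (((l : ℝ) + 0.1) / (3.92 * p)) (((p : ℝ) - (l : ℝ) + 0.1) / (3.92 * p)))

lemma eps_le_tenth (p l : ℕ) : eps p l ≤ 0.1 := by
  unfold eps
  split
  · exact le_rfl
  · exact min_le_left _ _

lemma eps_le_left (p l : ℕ) (hp : 5 ≤ p) : eps p l ≤ ((l : ℝ) + 0.1) / (3.92 * p) := by
  rw [eps, if_neg (by omega)]
  exact (min_le_right _ _).trans (min_le_left _ _)

lemma eps_le_right (p l : ℕ) (hp : 5 ≤ p) :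
    eps p l ≤ ((p : ℝ) - l + 0.1) / (3.92 * p) := by
  rw [eps, if_neg (by omega)]
  exact (min_le_right _ _).trans (min_le_right _ _)

lemma weighted_sum_le_of_le_tenth {p a X Y : ℝ} (hp : 0 ≤ p) (hp4 : p ≤ 4) (ha : 1 ≤ a)
    (hX : X ≤ 0.1) (hY : Y ≤ 0.1) : p * X + (p + 1) * Y ≤ 0.9 * a :=
  calc p * X + (p + 1) * Y ≤ p * 0.1 + (p + 1) * 0.1 := by gcongr
    _ ≤ 0.9 * a := by linarith

lemma weighted_sum_le_of_le_div {p a X Y : ℝ} (hp : 1 ≤ p) (ha : 1 ≤ a)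
    (hX : X ≤ (a + 0.1) / (3.92 * (p + 1))) (hY : Y ≤ (a + 0.1) / (3.92 * p)) :
    p * X + (p + 1) * Y ≤ 0.9 * a := by
  have hratio : p / (p + 1) + (p + 1) / p ≤ 5 / 2 := by
    rw [div_add_div _ _ (by positivity) (by positivity), div_le_iff₀ (by positivity)]
    nlinarith
  calc p * X + (p + 1) * Y
      ≤ p * ((a + 0.1) / (3.92 * (p + 1))) + (p + 1) * ((a + 0.1) / (3.92 * p)) := by
        gcongr
    _ = (a + 0.1) / 3.92 * (p / (p + 1) + (p + 1) / p) := by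
        field_simp
    _ ≤ (a + 0.1) / 3.92 * (5 / 2) := by gcongr
    _ ≤ 0.9 * a := by rw [div_mul_eq_mul_div, div_le_iff₀ (by norm_num)]; linarith

theorem eps_ineq_general (p l : ℕ) (hl : 1 ≤ l) (hlp : l < p) :
    (p : ℝ) * eps (p + 1) l + ((p : ℝ) + 1) * eps p l ≤ 0.9 * l ∧
      (p : ℝ) * eps (p + 1) (l + 1) + ((p : ℝ) + 1) * eps p l ≤ 0.9 * ((p : ℝ) - l) := by
  have hL : (1 : ℝ) ≤ l := by exact_mod_cast hl
  have hPL : (1 : ℝ) ≤ p - l := by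
    have : (l : ℝ) + 1 ≤ p := by exact_mod_cast hlp
    linarith
  rcases le_or_gt p 4 with hp4 | hp5
  · have hP4 : (p : ℝ) ≤ 4 := by exact_mod_cast hp4
    exact ⟨weighted_sum_le_of_le_tenth p.cast_nonneg hP4 hL (eps_le_tenth _ _) (eps_le_tenth _ _),
      weighted_sum_le_of_le_tenth p.cast_nonneg hP4 hPL (eps_le_tenth _ _) (eps_le_tenth _ _)⟩
  · have hP : (1 : ℝ) ≤ p := by exact_mod_cast (by omega : 1 ≤ p)
    refine ⟨weighted_sum_le_of_le_div hP hL ?_ (eps_le_left p l hp5),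
      weighted_sum_le_of_le_div hP hPL ?_ (eps_le_right p l hp5)⟩
    · convert eps_le_left (p + 1) l (by omega) using 3
      push_cast; ring
    · convert eps_le_right (p + 1) (l + 1) (by omega) using 3 <;> push_cast <;> ring

/-- For `p ≥ 2` and `1 ≤ l < p`:
`p ε_{p+1,l} + (p+1) ε_{p,l} ≤ 0.9 l` and `p ε_{p+1,l+1} + (p+1) ε_{p,l} ≤ 0.9 (p−l)`. -/
theorem eps_ineq (p l : ℕ) (hp : 2 ≤ p) (hl : 1 ≤ l) (hlp : l < p) :
    (p : ℝ) * eps (p + 1) l + ((p : ℝ) + 1) * eps p l ≤ 0.9 * l ∧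
      (p : ℝ) * eps (p + 1) (l + 1) + ((p : ℝ) + 1) * eps p l ≤ 0.9 * ((p : ℝ) - l) :=
  eps_ineq_general p l hl hlp
end

section
/- For p ≥ 2 and 1 ≤ l < p, the interval I_{p,l} := {2cos θ : |θ − lπ/p| ≤ 0.1π/p and |S_p(2cos θ)| ≤ 1/4} is contained in J_{p,l}, where S_p is the Chebyshev-type polynomial and J_{p,l} is the fattened interval defined via ε_{p,l}. -/
open Real

/-- Chebyshev-type polynomials: `S₀ = 0`, `S₁ = 1`, `S_{p+1}(x) = x S_p(x) − S_{p−1}(x)`. -/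
noncomputable def chebS : ℕ → ℝ → ℝ
  | 0 => fun _ => 0
  | 1 => fun _ => 1
  | p + 2 => fun x => x * chebS (p + 1) x - chebS p x

/-- `I_{p,l} = {2 cos θ : |θ − lπ/p| ≤ 0.1π/p and |S_p(2 cos θ)| ≤ 1/4}`. -/
noncomputable def Iset (p l : ℕ) : Set ℝ :=
  {x | ∃ θ : ℝ, x = 2 * Real.cos θ ∧ |θ - (l : ℝ) * π / p| ≤ 0.1 * π / p ∧
    |chebS p (2 * Real.cos θ)| ≤ 1 / 4}

/-- `J_{p,l} = {2 cos θ : |θ − lπ/p| ≤ ε_{p,l} π/p}`. -/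
noncomputable def Jset (p l : ℕ) : Set ℝ :=
  (fun θ : ℝ => 2 * Real.cos θ) ''
    Set.Icc ((l : ℝ) * π / p - eps p l * π / p) ((l : ℝ) * π / p + eps p l * π / p)

theorem chebS_mul_sin : ∀ (p : ℕ) (θ : ℝ),
    chebS p (2 * Real.cos θ) * Real.sin θ = Real.sin (p * θ)
  | 0, θ => by simp [chebS]
  | 1, θ => by simp [chebS]
  | (n+2), θ => by
    have h1 := chebS_mul_sin (n+1) θ
    have h2 := chebS_mul_sin n θ
    simp only [chebS]
    push_cast at h1 h2 ⊢
    have e1 : ((n:ℝ)+2) * θ = ((n:ℝ)+1)*θ + θ := by ring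
    have e2 : (n:ℝ) * θ = ((n:ℝ)+1)*θ - θ := by ring
    rw [e1, Real.sin_add]
    rw [e2, Real.sin_sub] at h2
    linear_combination 2 * Real.cos θ * h1 - h2

theorem sin_pi_div_ten' : Real.sin (π/10) = (Real.sqrt 5 - 1)/4 := by
  have h : Real.sin (π/10) = Real.cos (2*(π/5)) := by
    rw [← Real.cos_pi_div_two_sub]; ring_nf
  rw [h, Real.cos_two_mul, Real.cos_pi_div_five]
  have h5 : (Real.sqrt 5)^2 = 5 := Real.sq_sqrt (by norm_num)
  nlinarith [h5]

theorem sin_pi_div_ten_ge : 0.098 * π ≤ Real.sin (π/10) := by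
  rw [sin_pi_div_ten']
  nlinarith [Real.pi_lt_d2, Real.sq_sqrt (show (0:ℝ) ≤ 5 by norm_num),
    Real.sqrt_nonneg 5]

set_option maxHeartbeats 1000000 in
/-- For `p ≥ 2` and `1 ≤ l < p`, `I_{p,l} ⊆ J_{p,l}`. -/
theorem Iset_subset_Jset (p l : ℕ) (hp : 2 ≤ p) (hl : 1 ≤ l) (hlp : l < p) :
    Iset p l ⊆ Jset p l := by
  intro x hx
  obtain ⟨θ, hxθ, h1, h2⟩ := hx
  have hπ := Real.pi_pos
  have hP0 : (0:ℝ) < (p:ℝ) := by positivity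
  suffices habs : |θ - (l : ℝ) * π / p| ≤ eps p l * π / p by
    obtain ⟨ha, hb⟩ := abs_le.1 habs
    exact ⟨θ, Set.mem_Icc.2 ⟨by linarith, by linarith⟩, hxθ.symm⟩
  unfold eps
  split_ifs with hp4
  · exact h1
  · -- p ≥ 5
    set P : ℝ := (p:ℝ) with hPdef
    set L : ℝ := (l:ℝ) with hLdef
    have hP5 : (5:ℝ) ≤ P := by rw [hPdef]; exact_mod_cast (by omega : 5 ≤ p)
    have hL1 : (1:ℝ) ≤ L := by rw [hLdef]; exact_mod_cast hl
    have hLP : L ≤ P - 1 := by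
      rw [hPdef, hLdef]
      have : (l:ℝ) + 1 ≤ (p:ℝ) := by exact_mod_cast hlp
      linarith
    have hu : (0:ℝ) < π / P := div_pos hπ hP0
    obtain ⟨hd1, hd2⟩ := abs_le.1 h1
    -- θ bounds
    have hθ1 : θ ≤ (L+0.1)*π/P := by
      have : L*π/P + 0.1*π/P = (L+0.1)*π/P := by ring
      linarith
    have hθ2 : (L-0.1)*π/P ≤ θ := by
      have : L*π/P - 0.1*π/P = (L-0.1)*π/P := by ring
      linarith
    have hθpos : 0 < θ :=
      lt_of_lt_of_le (div_pos (mul_pos (by linarith) hπ) hP0) hθ2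
    have hθπ : θ < π := by
      have : (L+0.1)*π/P < π := by
        rw [div_lt_iff₀ hP0]; nlinarith
      linarith
    have hs0 : 0 ≤ Real.sin θ := Real.sin_nonneg_of_nonneg_of_le_pi hθpos.le hθπ.le
    have hs1 : Real.sin θ ≤ (L+0.1)*π/P := (Real.sin_le hθpos.le).trans hθ1
    have hs2 : Real.sin θ ≤ (P-L+0.1)*π/P := by
      have e : π - (L-0.1)*π/P = (P-L+0.1)*π/P := by field_simp; ring
      have := Real.sin_le (x := π - θ) (by linarith)
      rw [Real.sin_pi_sub] at this
      linarith
    -- sin(pθ) bound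
    have hsinP : |Real.sin (P*θ)| ≤ (1/4) * Real.sin θ := by
      rw [← chebS_mul_sin p θ, abs_mul, abs_of_nonneg hs0]
      exact mul_le_mul_of_nonneg_right h2 hs0
    set y : ℝ := P * (θ - L*π/P) with hydef
    have hPy : P*θ = L*π + y := by
      rw [hydef]; field_simp; ring
    have hsy : |Real.sin (P*θ)| = |Real.sin y| := by
      rw [hPy, Real.sin_add, Real.sin_nat_mul_pi, zero_mul, zero_add, abs_mul]
      have hc : Real.cos (L*π) = (-1)^l := by
        simpa using Real.cos_nat_mul_pi_sub 0 l
      rw [hc]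
      simp
    have hy1 : |y| ≤ π/10 := by
      rw [hydef, abs_mul, abs_of_nonneg hP0.le]
      calc P * |θ - L*π/P| ≤ P * (0.1*π/P) := by
            exact mul_le_mul_of_nonneg_left h1 hP0.le
        _ = π/10 := by field_simp; ring
    have hy0 : (0:ℝ) ≤ |y| := abs_nonneg y
    -- |sin y| = sin |y|
    have hyπ : y ≤ π := le_trans (le_abs_self y) (by linarith)
    have hyπ' : -π ≤ y := by linarith [neg_abs_le y]
    have hsabs : Real.sin |y| = |Real.sin y| := by
      rcases le_or_gt 0 y with h | h
      · rw [abs_of_nonneg h, abs_of_nonneg (Real.sin_nonneg_of_nonneg_of_le_pi h hyπ)]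
      · rw [abs_of_neg h,
          abs_of_nonpos (Real.sin_nonpos_of_nonpos_of_neg_pi_le h.le hyπ'),
          Real.sin_neg]
    -- concavity
    have hconc : |y| * Real.sin (π/10) ≤ (π/10) * Real.sin |y| := by
      have h10 : (0:ℝ) < π/10 := by linarith
      set t : ℝ := |y| / (π/10) with htdef
      have ht0 : 0 ≤ t := div_nonneg hy0 h10.le
      have ht1 : t ≤ 1 := (div_le_one h10).2 hy1
      have hcc := strictConcaveOn_sin_Icc.concaveOn.2
        (Set.mem_Icc.2 ⟨le_refl 0, hπ.le⟩)
        (Set.mem_Icc.2 ⟨h10.le, by linarith⟩)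
        (show (0:ℝ) ≤ 1 - t by linarith) (show (0:ℝ) ≤ t from ht0)
        (show (1:ℝ) - t + t = 1 by ring)
      simp only [smul_eq_mul, Real.sin_zero, mul_zero, zero_add] at hcc
      have hts : t * (π/10) = |y| := by
        rw [htdef]; field_simp
      rw [hts] at hcc
      calc |y| * Real.sin (π/10) = (π/10) * (t * Real.sin (π/10)) := by
            rw [htdef]; field_simp
        _ ≤ (π/10) * Real.sin |y| := by
            exact mul_le_mul_of_nonneg_left hcc h10.le
    have hkey := sin_pi_div_ten_ge
    -- main estimate: 3.92 * |y| ≤ sin θ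
    have hmain : 3.92 * |y| ≤ Real.sin θ := by
      have c1 : |y| * (0.098*π) ≤ (π/10) * ((1/4) * Real.sin θ) := by
        calc |y| * (0.098*π) ≤ |y| * Real.sin (π/10) :=
              mul_le_mul_of_nonneg_left hkey hy0
          _ ≤ (π/10) * Real.sin |y| := hconc
          _ = (π/10) * |Real.sin y| := by rw [hsabs]
          _ = (π/10) * |Real.sin (P*θ)| := by rw [hsy]
          _ ≤ (π/10) * ((1/4) * Real.sin θ) :=
              mul_le_mul_of_nonneg_left hsinP (by linarith)
      nlinarith [mul_pos hπ (show (0:ℝ) < 1 by norm_num)]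
    -- conclude
    have hyd : |y| = P * |θ - L*π/P| := by
      rw [hydef, abs_mul, abs_of_nonneg hP0.le]
    have hA : |θ - L*π/P| ≤ (L+0.1)/(3.92*P) * (π/P) := by
      rw [div_mul_eq_mul_div, le_div_iff₀ (show (0:ℝ) < 3.92*P by positivity)]
      nlinarith [hmain, hyd, hs1, mul_div_assoc (L+0.1) π P]
    have hB : |θ - L*π/P| ≤ (P-L+0.1)/(3.92*P) * (π/P) := by
      rw [div_mul_eq_mul_div, le_div_iff₀ (show (0:ℝ) < 3.92*P by positivity)]
      nlinarith [hmain, hyd, hs2, mul_div_assoc (P-L+0.1) π P]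
    have h01 : |θ - L*π/P| ≤ 0.1 * (π/P) := by
      rw [← mul_div_assoc]; exact h1
    calc |θ - L*π/P|
        ≤ min (0.1*(π/P)) (min ((L+0.1)/(3.92*P)*(π/P)) ((P-L+0.1)/(3.92*P)*(π/P))) :=
          le_min h01 (le_min hA hB)
      _ = min 0.1 (min ((L+0.1)/(3.92*P)) ((P-L+0.1)/(3.92*P))) * (π/P) := by
          rw [min_mul_of_nonneg _ _ hu.le, min_mul_of_nonneg _ _ hu.le]
      _ = min 0.1 (min ((L+0.1)/(3.92*P)) ((P-L+0.1)/(3.92*P))) * π / P := by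
          rw [mul_div_assoc]
end

section
/- Let (X,ρ) be an ultrametric space, μ a finite Borel measure on X, and x ∈ X. Suppose (r_n) is a strictly decreasing sequence of radii tending to 0 such that every closed ball around x equals B̄(x, r_n) for some n (i.e., the closed balls around x are exactly the sets B̄(x,r_n)). If lim_n (log μ(B̄(x,r_{n−1})) − log μ(B̄(x,r_n)))/log r_n = 0, then the lower local dimension of μ at x equals liminf_n log μ(B̄(x,r_n))/log r_n. -/
open Filter MeasureTheory Metric

private lemma myaux1 {a b c : ℝ} (h : a ≤ b) (hc : c < 0) : b / c ≤ a / c := by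
  rw [div_eq_mul_inv, div_eq_mul_inv]
  exact mul_le_mul_of_nonpos_right h (inv_nonpos.mpr hc.le)

private lemma myaux2 {a c d : ℝ} (ha : a ≤ 0) (hcd : c ≤ d) (hd : d < 0) : a / c ≤ a / d := by
  have hc : c < 0 := lt_of_le_of_lt hcd hd
  have h0 : a / c - a / d = a * (d - c) / (c * d) := by
    rw [div_sub_div _ _ hc.ne hd.ne]; ring_nf
  have h1 : a * (d - c) ≤ 0 := mul_nonpos_of_nonpos_of_nonneg ha (by linarith)
  have h2 : 0 < c * d := mul_pos_of_neg_of_neg hc hd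
  nlinarith [div_nonpos_of_nonpos_of_nonneg h1 h2.le]

private lemma myaux3 {a c d : ℝ} (ha : 0 ≤ a) (hcd : c ≤ d) (hd : d < 0) : a / d ≤ a / c := by
  have := myaux2 (neg_nonpos_of_nonneg ha) hcd hd
  simp only [neg_div] at this
  linarith

private lemma my_exists_close (c : ℝ) {p q : ℝ} (hp0 : 0 < p) (hp1 : p < 1) (hpq : p < q)
    {ε : ℝ} (hε : 0 < ε) :
    ∃ s, p < s ∧ s ≤ q ∧ c / Real.log s ≤ c / Real.log p + ε := by
  have hlp : Real.log p ≠ 0 := (Real.log_neg hp0 hp1).ne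
  have hcont : ContinuousAt (fun s => c / Real.log s) p :=
    continuousAt_const.div (Real.continuousAt_log hp0.ne') hlp
  have hev : ∀ᶠ s in nhds p, c / Real.log s < c / Real.log p + ε :=
    hcont.eventually_lt_const (by linarith)
  have hev' : ∀ᶠ s in nhdsWithin p (Set.Ioi p),
      c / Real.log s < c / Real.log p + ε := hev.filter_mono nhdsWithin_le_nhds
  have hmem : Set.Ioc p q ∈ nhdsWithin p (Set.Ioi p) :=
    Ioc_mem_nhdsGT_of_mem ⟨le_refl p, hpq⟩
  obtain ⟨s, hs1, hs2⟩ := (hev'.and (eventually_of_mem hmem fun y hy => hy)).exists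
  exact ⟨s, hs2.1, hs2.2, hs1.le⟩

private lemma my_sSup_eq {S T : Set ℝ} (hS : S.Nonempty) (hT : T.Nonempty)
    (hST : ∀ a ∈ S, ∀ ε > (0:ℝ), a - ε ∈ T) (hTS : ∀ a ∈ T, ∀ ε > (0:ℝ), a - ε ∈ S) :
    sSup S = sSup T := by
  by_cases hb : BddAbove T
  · have hbS : BddAbove S := by
      obtain ⟨b, hbd⟩ := hb
      exact ⟨b + 1, fun a ha => by have := hbd (hST a ha 1 one_pos); linarith⟩
    apply le_antisymm
    · apply csSup_le hS
      intro a ha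
      apply le_of_forall_pos_le_add
      intro ε hε
      have := le_csSup hb (hST a ha ε hε); linarith
    · apply csSup_le hT
      intro a ha
      apply le_of_forall_pos_le_add
      intro ε hε
      have := le_csSup hbS (hTS a ha ε hε); linarith
  · have hbS : ¬ BddAbove S := by
      intro h
      obtain ⟨b, hbd⟩ := h
      exact hb ⟨b + 1, fun a ha => by have := hbd (hTS a ha 1 one_pos); linarith⟩
    rw [Real.sSup_of_not_bddAbove hb, Real.sSup_of_not_bddAbove hbS]

/-- Let `(X, ρ)` be an ultrametric space, `μ` a finite Borel measure on `X`, `x ∈ X`,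
and `(r_n)` a strictly decreasing sequence of positive radii tending to `0` such that
every closed ball around `x` equals `B̄(x, r_n)` for some `n`. If
`(log μ(B̄(x,r_n)) − log μ(B̄(x,r_{n+1})))/log r_{n+1} → 0`, then the lower local
dimension of `μ` at `x` equals `liminf_n log μ(B̄(x,r_n))/log r_n`. -/
theorem lower_local_dim_along_balls {X : Type*} [MetricSpace X] [MeasurableSpace X]
    [BorelSpace X]
    (hultra : ∀ x y z : X, dist x z ≤ max (dist x y) (dist y z))
    (μ : Measure X) [IsFiniteMeasure μ] (x : X)
    (r : ℕ → ℝ) (hrpos : ∀ n, 0 < r n) (hranti : StrictAnti r)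
    (hr0 : Tendsto r atTop (nhds 0))
    (hballs : ∀ s : ℝ, 0 < s → ∃ n, closedBall x s = closedBall x (r n))
    (hlog : Tendsto
      (fun n : ℕ =>
        (Real.log (μ (closedBall x (r n))).toReal -
          Real.log (μ (closedBall x (r (n + 1)))).toReal) / Real.log (r (n + 1)))
      atTop (nhds 0)) :
    liminf (fun s : ℝ => Real.log (μ (ball x s)).toReal / Real.log s)
        (nhdsWithin 0 (Set.Ioi 0)) =
      liminf (fun n : ℕ => Real.log (μ (closedBall x (r n))).toReal / Real.log (r n))
        atTop := by
  classical
  by_cases hdeg : ∃ n, μ (closedBall x (r n)) = 0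
  · -- degenerate case : both sides are eventually 0
    obtain ⟨n0, hn0⟩ := hdeg
    have hL : liminf (fun s : ℝ => Real.log (μ (ball x s)).toReal / Real.log s)
        (nhdsWithin 0 (Set.Ioi 0)) = 0 := by
      have hev : ∀ᶠ s in nhdsWithin (0:ℝ) (Set.Ioi 0),
          Real.log (μ (ball x s)).toReal / Real.log s = (0:ℝ) := by
        filter_upwards [Ioo_mem_nhdsGT_of_mem
          (⟨le_refl (0:ℝ), hrpos n0⟩ : (0:ℝ) ∈ Set.Ico (0:ℝ) (r n0))] with s hs
        have hsub : ball x s ⊆ closedBall x (r n0) :=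
          (ball_subset_closedBall).trans (closedBall_subset_closedBall hs.2.le)
        have : μ (ball x s) = 0 := measure_mono_null hsub hn0
        simp [this]
      rw [liminf_congr hev]
      exact liminf_const 0
    have hR : liminf (fun n : ℕ =>
        Real.log (μ (closedBall x (r n))).toReal / Real.log (r n)) atTop = 0 := by
      have hev : ∀ᶠ n in atTop,
          Real.log (μ (closedBall x (r n))).toReal / Real.log (r n) = (0:ℝ) := by
        filter_upwards [eventually_ge_atTop n0] with n hn
        have : μ (closedBall x (r n)) = 0 :=
          measure_mono_null (closedBall_subset_closedBall (hranti.antitone hn)) hn0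
        simp [this]
      rw [liminf_congr hev]
      exact liminf_const 0
    rw [hL, hR]
  · -- main case
    push_neg at hdeg
    have hpos : ∀ n, 0 < μ (closedBall x (r n)) :=
      fun n => (hdeg n).bot_lt
    have hfin : ∀ t : Set X, μ t ≠ ⊤ := fun t => measure_ne_top μ t
    set a : ℕ → ℝ := fun n => Real.log (μ (closedBall x (r n))).toReal with ha_def
    set L : ℝ → ℝ := fun s => Real.log (μ (ball x s)).toReal with hL_def
    set g : ℕ → ℝ := fun n => a n / Real.log (r n) with hg_def
    set f : ℝ → ℝ := fun s => L s / Real.log s with hf_def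
    -- basic facts
    have hballpos : ∀ s : ℝ, 0 < s → 0 < μ (ball x s) := by
      intro s hs
      obtain ⟨n, hn⟩ := (hr0.eventually_lt_const hs).exists
      exact lt_of_lt_of_le (hpos n) (measure_mono (closedBall_subset_ball hn))
    have hlogmono : ∀ {t u : Set X}, 0 < μ t → t ⊆ u →
        Real.log (μ t).toReal ≤ Real.log (μ u).toReal := by
      intro t u ht hsub
      exact Real.log_le_log (ENNReal.toReal_pos ht.ne' (hfin t))
        (ENNReal.toReal_mono (hfin u) (measure_mono hsub))
    have hLa : ∀ {s : ℝ} {n : ℕ}, 0 < s → s ≤ r n → L s ≤ a n := by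
      intro s n hs hsr
      exact hlogmono (hballpos s hs)
        ((ball_subset_closedBall).trans (closedBall_subset_closedBall hsr))
    have haL : ∀ {s : ℝ} {n : ℕ}, r n < s → a n ≤ L s := by
      intro s n h
      exact hlogmono (hpos n) (closedBall_subset_ball h)
    -- global upper bound
    set A : ℝ := |Real.log (μ Set.univ).toReal| with hA_def
    have hLA : ∀ s : ℝ, 0 < s → L s ≤ A :=
      fun s hs => (hlogmono (hballpos s hs) (Set.subset_univ _)).trans (le_abs_self _)
    have haA : ∀ n, a n ≤ A :=
      fun n => (hlogmono (hpos n) (Set.subset_univ _)).trans (le_abs_self _)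
    have hA0 : 0 ≤ A := abs_nonneg _
    -- index location lemma
    have key : ∀ N : ℕ, ∀ s : ℝ, 0 < s → s < r N →
        ∃ n, N ≤ n ∧ r (n + 1) < s ∧ s ≤ r n := by
      intro N s hs hsN
      have hex : ∃ m, r m < s := (hr0.eventually_lt_const hs).exists
      have hm0 : r (Nat.find hex) < s := Nat.find_spec hex
      have hNm0 : N < Nat.find hex := by
        by_contra h
        push_neg at h
        exact absurd hsN (not_lt.mpr ((hranti.antitone h).trans hm0.le))
      refine ⟨Nat.find hex - 1, by omega, ?_, ?_⟩
      · have : Nat.find hex - 1 + 1 = Nat.find hex := by omega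
        rw [this]; exact hm0
      · have := Nat.find_min hex (m := Nat.find hex - 1) (by omega)
        exact not_lt.mp this
    rw [liminf_eq, liminf_eq]
    apply my_sSup_eq
    · -- nonempty : -A - 1 is an eventual lower bound for f
      refine ⟨-A - 1, ?_⟩
      have hδ : (0:ℝ) < Real.exp (-1) := Real.exp_pos _
      filter_upwards [Ioo_mem_nhdsGT_of_mem
        (⟨le_refl (0:ℝ), hδ⟩ : (0:ℝ) ∈ Set.Ico (0:ℝ) (Real.exp (-1)))] with s hs
      have hlogs : Real.log s ≤ -1 := by
        have := Real.log_le_log hs.1 hs.2.le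
        rwa [Real.log_exp] at this
      have hlogs0 : Real.log s < 0 := by linarith
      have h1 : A / Real.log s ≤ f s := myaux1 (hLA s hs.1) hlogs0
      have h2 : -A ≤ A / Real.log s := by
        rw [le_div_iff_of_neg hlogs0]
        nlinarith
      show -A - 1 ≤ f s
      linarith
    · -- nonempty : -A - 1 is an eventual lower bound for g
      refine ⟨-A - 1, ?_⟩
      have : ∀ᶠ n in atTop, r n < Real.exp (-1) :=
        hr0.eventually_lt_const (Real.exp_pos _)
      filter_upwards [this] with n hn
      have hlogs : Real.log (r n) ≤ -1 := by
        have := Real.log_le_log (hrpos n) hn.le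
        rwa [Real.log_exp] at this
      have hlogs0 : Real.log (r n) < 0 := by linarith
      have h1 : A / Real.log (r n) ≤ g n := myaux1 (haA n) hlogs0
      have h2 : -A ≤ A / Real.log (r n) := by
        rw [le_div_iff_of_neg hlogs0]
        nlinarith
      show -A - 1 ≤ g n
      linarith
    · -- f-side to g-side : via the sequence u
      -- construct u
      have hP : ∀ n : ℕ, r (n + 1) < 1 →
          ∃ s, r (n + 1) < s ∧ s ≤ r n ∧
            a (n + 1) / Real.log s ≤ a (n + 1) / Real.log (r (n + 1)) + 1 / ((n:ℝ) + 1) := by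
        intro n h
        exact my_exists_close (a (n + 1)) (hrpos (n + 1)) h (hranti (Nat.lt_succ_self n))
          (by positivity)
      set u : ℕ → ℝ := fun n =>
        if h : r (n + 1) < 1 then Classical.choose (hP n h) else r n with hu_def
      have hu_mem : ∀ n, 0 < u n ∧ u n ≤ r n := by
        intro n
        simp only [hu_def]
        split_ifs with h
        · obtain ⟨h1, h2, _⟩ := Classical.choose_spec (hP n h)
          exact ⟨(hrpos (n + 1)).trans h1, h2⟩
        · exact ⟨hrpos n, le_refl _⟩
      have hu_tendsto : Tendsto u atTop (nhdsWithin 0 (Set.Ioi 0)) := by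
        apply tendsto_nhdsWithin_of_tendsto_nhds_of_eventually_within
        · exact squeeze_zero (fun n => (hu_mem n).1.le) (fun n => (hu_mem n).2) hr0
        · exact Eventually.of_forall fun n => (hu_mem n).1
      obtain ⟨N1, hN1⟩ := eventually_atTop.mp (hr0.eventually_lt_const one_pos)
      have hu_key : ∀ᶠ n in atTop, f (u n) ≤ g (n + 1) + 1 / ((n:ℝ) + 1) := by
        filter_upwards [eventually_ge_atTop N1] with n hn
        have hr1 : r (n + 1) < 1 := hN1 (n + 1) (by omega)
        have hrn1 : r n < 1 := hN1 n hn
        simp only [hu_def, dif_pos hr1]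
        obtain ⟨h1, h2, h3⟩ := Classical.choose_spec (hP n hr1)
        set s := Classical.choose (hP n hr1)
        have hs0 : 0 < s := (hrpos (n + 1)).trans h1
        have hlogs0 : Real.log s < 0 := Real.log_neg hs0 (lt_of_le_of_lt h2 hrn1)
        have hfle : f s ≤ a (n + 1) / Real.log s := myaux1 (haL h1) hlogs0
        exact hfle.trans h3
      intro a0 ha0 ε hε
      have h1 : ∀ᶠ n in atTop, a0 ≤ f (u n) := hu_tendsto.eventually ha0
      obtain ⟨M, hM⟩ := exists_nat_one_div_lt (K := ℝ) hε
      have h2 : ∀ᶠ n : ℕ in atTop, 1 / ((n:ℝ) + 1) < ε := by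
        filter_upwards [eventually_ge_atTop M] with n hn
        calc 1 / ((n:ℝ) + 1) ≤ 1 / ((M:ℝ) + 1) := by
              apply one_div_le_one_div_of_le (by positivity)
              exact_mod_cast by omega
          _ < ε := hM
      have h3 : ∀ᶠ n in atTop, a0 - ε ≤ g (n + 1) := by
        filter_upwards [h1, h2, hu_key] with n hn1 hn2 hn3
        linarith
      obtain ⟨N, hN⟩ := eventually_atTop.mp h3
      rw [Set.mem_setOf_eq, eventually_atTop]
      exact ⟨N + 1, fun m hm => by
        obtain ⟨k, rfl⟩ : ∃ k, m = k + 1 := ⟨m - 1, by omega⟩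
        exact hN k (by omega)⟩
    · -- g-side to f-side
      intro a0 ha0 ε hε
      obtain ⟨N1, hN1⟩ := eventually_atTop.mp ha0
      have hlog' : ∀ᶠ n in atTop,
          |(a n - a (n + 1)) / Real.log (r (n + 1))| < ε := by
        have := Metric.tendsto_atTop.mp hlog ε hε
        obtain ⟨N, hN⟩ := this
        rw [eventually_atTop]
        refine ⟨N, fun n hn => ?_⟩
        have := hN n hn
        rwa [Real.dist_eq, sub_zero] at this
      obtain ⟨N2, hN2⟩ := eventually_atTop.mp hlog'
      obtain ⟨N3, hN3⟩ := eventually_atTop.mp (hr0.eventually_lt_const one_pos)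
      set N := max (max N1 N2) N3 with hN_def
      rw [Set.mem_setOf_eq]
      filter_upwards [Ioo_mem_nhdsGT_of_mem
        (⟨le_refl (0:ℝ), hrpos N⟩ : (0:ℝ) ∈ Set.Ico (0:ℝ) (r N))] with s hs
      obtain ⟨n, hnN, hs1, hs2⟩ := key N s hs.1 hs.2
      have hn1 : N1 ≤ n := le_trans (le_trans (le_max_left _ _) (le_max_left _ _)) hnN
      have hn2 : N2 ≤ n := le_trans (le_trans (le_max_right _ _) (le_max_left _ _)) hnN
      have hn3 : N3 ≤ n := le_trans (le_max_right _ _) hnN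
      have hrn1 : r n < 1 := hN3 n hn3
      have hlogs0 : Real.log s < 0 := Real.log_neg hs.1 (lt_of_le_of_lt hs2 hrn1)
      have hfs : a n / Real.log s ≤ f s := myaux1 (hLa hs.1 hs2) hlogs0
      rcases le_or_gt (a n) 0 with han | han
      · have hlogr1 : Real.log (r (n + 1)) < 0 :=
          Real.log_neg (hrpos _) (lt_trans (hranti (Nat.lt_succ_self n)) hrn1)
        have hle : a n / Real.log (r (n + 1)) ≤ a n / Real.log s :=
          myaux2 han (Real.log_le_log (hrpos _) hs1.le) hlogs0
        have heq : a n / Real.log (r (n + 1)) =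
            a (n + 1) / Real.log (r (n + 1)) +
              (a n - a (n + 1)) / Real.log (r (n + 1)) := by
          rw [← add_div]; ring_nf
        have hg1 : a0 ≤ g (n + 1) := hN1 (n + 1) (by omega)
        have hε1 := abs_lt.mp (hN2 n hn2)
        have : g (n + 1) = a (n + 1) / Real.log (r (n + 1)) := rfl
        linarith [hε1.1]
      · have hle : a n / Real.log (r n) ≤ a n / Real.log s :=
          myaux3 han.le (Real.log_le_log hs.1 hs2) (Real.log_neg (hrpos n) hrn1)
        have hg1 : a0 ≤ g n := hN1 n hn1
        have : g n = a n / Real.log (r n) := rfl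
        linarith
end
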